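/- Let Λ = UV* + W where W is a dual certificate (P_T W = 0, ‖W‖ < 1/2, ‖P_Ω(UV* − λ·sgn(S₀) + W)‖_F ≤ λ/4, ‖P_{Ω⊥}(UV* + W)‖_∞ < λ/2), and write λ·P_Ω D = P_Ω(UV* − λ·sgn(S₀) + W), so ‖P_Ω D‖_F ≤ 1/4. Let Z_L = UV* + W' with P_T W' = 0 and ‖W'‖ ≤ 1, and Z_S = λ(sgn(S₀) + F) with P_Ω F = 0 and ‖F‖_∞ ≤ 1 (i.e., Z_L ∈ ∂‖L₀‖_* and Z_S ∈ ∂(λ‖S₀‖_1)). Then for any pair H = (H_L, H_S) with H_L + H_S = 0: ⟨Z_L, H_L⟩ + ⟨Z_S, H_S⟩ ≥ ⟨Z_L − Λ, P_{T⊥}(H_L)⟩ + ⟨Z_S − Λ, P_{Ω⊥}(H_S)⟩ − (λ/4)·‖P_Ω(H_S)‖_F. -/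

import Mathlib

open Matrix BigOperators

noncomputable def frobNorm {m k : ℕ} (A : Matrix (Fin m) (Fin k) ℝ) : ℝ :=
  Real.sqrt (∑ i, ∑ j, (A i j) ^ 2)

theorem Matrix.isHermitian_transpose_mul_self {m k : ℕ} (A : Matrix (Fin m) (Fin k) ℝ) :
    (Aᵀ * A).IsHermitian := by
  rw [IsHermitian, conjTranspose_eq_transpose_of_trivial, transpose_mul, transpose_transpose]

noncomputable def nuclearNorm {m k : ℕ} (A : Matrix (Fin m) (Fin k) ℝ) : ℝ :=
  ∑ i, Real.sqrt ((Matrix.isHermitian_transpose_mul_self A).eigenvalues i)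

def l1Norm {m k : ℕ} (A : Matrix (Fin m) (Fin k) ℝ) : ℝ :=
  ∑ i, ∑ j, |A i j|

noncomputable def linfNorm {m k : ℕ} (A : Matrix (Fin m) (Fin k) ℝ) : ℝ :=
  ⨆ i, ⨆ j, |A i j|

noncomputable def specNorm {m k : ℕ} (A : Matrix (Fin m) (Fin k) ℝ) : ℝ :=
  ‖LinearMap.toContinuousLinearMap (Matrix.toEuclideanLin A)‖

def finner {m k : ℕ} (A B : Matrix (Fin m) (Fin k) ℝ) : ℝ :=
  ∑ i, ∑ j, A i j * B i j

noncomputable def projSet {n : ℕ} (Ω : Set (Fin n × Fin n)) (S : Matrix (Fin n) (Fin n) ℝ) :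
    Matrix (Fin n) (Fin n) ℝ :=
  fun i j => Ω.indicator (fun p => S p.1 p.2) (i, j)

def suppSet {n : ℕ} (S : Matrix (Fin n) (Fin n) ℝ) : Set (Fin n × Fin n) :=
  {p | S p.1 p.2 ≠ 0}

noncomputable def sgnMat {n : ℕ} (S : Matrix (Fin n) (Fin n) ℝ) : Matrix (Fin n) (Fin n) ℝ :=
  fun i j => Real.sign (S i j)

def Tspace {n r : ℕ} (U V : Matrix (Fin n) (Fin r) ℝ) : Set (Matrix (Fin n) (Fin n) ℝ) :=
  {X | ∃ Q R : Matrix (Fin n) (Fin r) ℝ, X = U * Qᵀ + R * Vᵀ}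

def IsOrthProjOnto {n : ℕ} (P : Matrix (Fin n) (Fin n) ℝ →ₗ[ℝ] Matrix (Fin n) (Fin n) ℝ)
    (T : Set (Matrix (Fin n) (Fin n) ℝ)) : Prop :=
  (∀ X, P X ∈ T) ∧ (∀ X ∈ T, P X = X) ∧ (∀ X Y, Y ∈ T → finner (X - P X) Y = 0)

noncomputable def pairFrob {n : ℕ} (X : Matrix (Fin n) (Fin n) ℝ × Matrix (Fin n) (Fin n) ℝ) : ℝ :=
  Real.sqrt (frobNorm X.1 ^ 2 + frobNorm X.2 ^ 2)

noncomputable def projGamma {n : ℕ} (X : Matrix (Fin n) (Fin n) ℝ × Matrix (Fin n) (Fin n) ℝ) :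
    Matrix (Fin n) (Fin n) ℝ × Matrix (Fin n) (Fin n) ℝ :=
  ((1/2 : ℝ) • (X.1 + X.2), (1/2 : ℝ) • (X.1 + X.2))

open scoped Classical

noncomputable def suppFinset {n : ℕ} (S : Matrix (Fin n) (Fin n) ℝ) : Finset (Fin n × Fin n) :=
  Finset.univ.filter (fun p => S p.1 p.2 ≠ 0)

/-! Since `H_L + H_S = 0`, the pairings with `Λ` cancel, so the left side is
`⟨Z_L − Λ, H_L⟩ + ⟨Z_S − Λ, H_S⟩`. Now `Z_L − Λ = W' − W` is killed by `P_T`, so it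
pairs with `H_L` only through `P_{T⊥} H_L`. And `P_Ω (Z_S − Λ) = −λ P_Ω D` because
`P_Ω F = 0`, so the `P_Ω`-part of the second pairing is
`−λ ⟨P_Ω D, P_Ω H_S⟩ ≥ −(λ/4) ‖P_Ω H_S‖_F` by Cauchy–Schwarz. -/

section Finner

variable {m k : ℕ}

lemma finner_add_right (A B C : Matrix (Fin m) (Fin k) ℝ) :
    finner A (B + C) = finner A B + finner A C := by
  simp only [finner, Matrix.add_apply, mul_add, Finset.sum_add_distrib]

lemma finner_sub_left (A B C : Matrix (Fin m) (Fin k) ℝ) :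
    finner (A - B) C = finner A C - finner B C := by
  simp only [finner, Matrix.sub_apply, sub_mul, Finset.sum_sub_distrib]

lemma finner_sub_right (A B C : Matrix (Fin m) (Fin k) ℝ) :
    finner A (B - C) = finner A B - finner A C := by
  simp only [finner, Matrix.sub_apply, mul_sub, Finset.sum_sub_distrib]

lemma finner_neg_left (A B : Matrix (Fin m) (Fin k) ℝ) : finner (-A) B = -finner A B := by
  simp only [finner, Matrix.neg_apply, neg_mul, Finset.sum_neg_distrib]

lemma finner_smul_left (c : ℝ) (A B : Matrix (Fin m) (Fin k) ℝ) :
    finner (c • A) B = c * finner A B := by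
  simp only [finner, Matrix.smul_apply, smul_eq_mul, mul_assoc, Finset.mul_sum]

lemma finner_zero_right (A : Matrix (Fin m) (Fin k) ℝ) : finner A 0 = 0 := by
  simp only [finner, Matrix.zero_apply, mul_zero, Finset.sum_const_zero]

lemma finner_le_frobNorm_mul_frobNorm (A B : Matrix (Fin m) (Fin k) ℝ) :
    finner A B ≤ frobNorm A * frobNorm B := by
  simpa only [finner, frobNorm, Fintype.sum_prod_type] using
    Real.sum_mul_le_sqrt_mul_sqrt Finset.univ (fun p : Fin m × Fin k => A p.1 p.2)
      (fun p => B p.1 p.2)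

end Finner

section ProjSet

variable {n : ℕ} (Ω : Set (Fin n × Fin n))

lemma projSet_apply (A : Matrix (Fin n) (Fin n) ℝ) (i j : Fin n) :
    projSet Ω A i j = if (i, j) ∈ Ω then A i j else 0 :=
  Set.indicator_apply _ _ _

lemma projSet_sub (A B : Matrix (Fin n) (Fin n) ℝ) :
    projSet Ω (A - B) = projSet Ω A - projSet Ω B := by
  ext i j
  simp only [Matrix.sub_apply, projSet_apply]
  split_ifs <;> simp

lemma projSet_smul (c : ℝ) (A : Matrix (Fin n) (Fin n) ℝ) :
    projSet Ω (c • A) = c • projSet Ω A := by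
  ext i j
  simp only [Matrix.smul_apply, projSet_apply]
  split_ifs <;> simp

lemma finner_projSet_right (A B : Matrix (Fin n) (Fin n) ℝ) :
    finner A (projSet Ω B) = finner (projSet Ω A) (projSet Ω B) := by
  unfold finner
  refine Finset.sum_congr rfl fun i _ => Finset.sum_congr rfl fun j _ => ?_
  simp only [projSet_apply]
  split_ifs <;> simp

end ProjSet

lemma IsOrthProjOnto.finner_apply_eq_zero {n : ℕ}
    {P : Matrix (Fin n) (Fin n) ℝ →ₗ[ℝ] Matrix (Fin n) (Fin n) ℝ}
    {T : Set (Matrix (Fin n) (Fin n) ℝ)}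
    (hP : IsOrthProjOnto P T) {A : Matrix (Fin n) (Fin n) ℝ} (hA : P A = 0)
    (X : Matrix (Fin n) (Fin n) ℝ) : finner A (P X) = 0 := by
  simpa only [hA, sub_zero] using hP.2.2 A (P X) (hP.1 X)

theorem stmt13_general {n r : ℕ} (S0 : Matrix (Fin n) (Fin n) ℝ)
    (U V : Matrix (Fin n) (Fin r) ℝ)
    -- P_T is the orthogonal projection onto T
    (PT : Matrix (Fin n) (Fin n) ℝ →ₗ[ℝ] Matrix (Fin n) (Fin n) ℝ)
    (hPT : IsOrthProjOnto PT (Tspace U V))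
    (lam : ℝ) (hlam : 0 < lam)
    -- the dual certificate W, and Λ = UV* + W
    (W : Matrix (Fin n) (Fin n) ℝ)
    (hW1 : PT W = 0)
    (Λ : Matrix (Fin n) (Fin n) ℝ) (hΛ : Λ = U * Vᵀ + W)
    -- D with λ P_Ω D = P_Ω(UV* − λ sgn(S₀) + W), so ‖P_Ω D‖_F ≤ 1/4
    (D : Matrix (Fin n) (Fin n) ℝ)
    (hD : lam • projSet (suppSet S0) D =
      projSet (suppSet S0) (U * Vᵀ - lam • sgnMat S0 + W))
    (hD4 : frobNorm (projSet (suppSet S0) D) ≤ 1 / 4)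
    -- the subgradients Z_L ∈ ∂‖L₀‖_* and Z_S ∈ ∂(λ‖S₀‖₁)
    (W' F ZL ZS : Matrix (Fin n) (Fin n) ℝ)
    (hW'1 : PT W' = 0) (hZL : ZL = U * Vᵀ + W')
    (hF1 : projSet (suppSet S0) F = 0)
    (hZS : ZS = lam • (sgnMat S0 + F))
    -- the pair H = (H_L, H_S) with H_L + H_S = 0
    (HL HS : Matrix (Fin n) (Fin n) ℝ) (hH : HL + HS = 0) :
    finner ZL HL + finner ZS HS ≥
      finner (ZL - Λ) (HL - PT HL) + finner (ZS - Λ) (HS - projSet (suppSet S0) HS)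
        - (lam / 4) * frobNorm (projSet (suppSet S0) HS) := by
  set Ω := suppSet S0
  have hΛH : finner Λ HL + finner Λ HS = 0 := by
    rw [← finner_add_right, hH, finner_zero_right]
  have hT : finner (ZL - Λ) (PT HL) = 0 :=
    hPT.finner_apply_eq_zero
      (by rw [hZL, hΛ, add_sub_add_left_eq_sub, map_sub, hW'1, hW1, sub_zero]) HL
  have hΩ : projSet Ω (Λ - ZS) = lam • projSet Ω D := by
    have h : Λ - ZS = (U * Vᵀ - lam • sgnMat S0 + W) - lam • F := by rw [hΛ, hZS]; module
    rw [h, projSet_sub, projSet_smul, hF1, smul_zero, sub_zero, hD]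
  have hΩH :
      finner (ZS - Λ) (projSet Ω HS) = -(lam * finner (projSet Ω D) (projSet Ω HS)) := by
    rw [← neg_sub Λ ZS, finner_neg_left, finner_projSet_right, hΩ, finner_smul_left]
  have hCS :
      lam * finner (projSet Ω D) (projSet Ω HS) ≤ lam / 4 * frobNorm (projSet Ω HS) := by
    calc lam * finner (projSet Ω D) (projSet Ω HS)
        ≤ lam * (frobNorm (projSet Ω D) * frobNorm (projSet Ω HS)) :=
          mul_le_mul_of_nonneg_left (finner_le_frobNorm_mul_frobNorm _ _) hlam.le
      _ ≤ lam * (1 / 4 * frobNorm (projSet Ω HS)) := by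
          gcongr
          exact Real.sqrt_nonneg _
      _ = lam / 4 * frobNorm (projSet Ω HS) := by ring
  rw [finner_sub_right (ZL - Λ), finner_sub_right (ZS - Λ), hT, hΩH, finner_sub_left ZL,
    finner_sub_left ZS]
  linarith

/-- subgradient inequality from the proof of Lemma 1.
Let Λ = UV* + W for a dual certificate W, let D satisfy λ P_Ω D = P_Ω(UV* − λ sgn(S₀) + W)
(so ‖P_Ω D‖_F ≤ 1/4), and let Z_L = UV* + W' (P_T W' = 0, ‖W'‖ ≤ 1) and
Z_S = λ(sgn(S₀) + F) (P_Ω F = 0, ‖F‖_∞ ≤ 1) be subgradients. Then for any H = (H_L, H_S)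
with H_L + H_S = 0:
⟨Z_L, H_L⟩ + ⟨Z_S, H_S⟩ ≥ ⟨Z_L − Λ, P_{T⊥}H_L⟩ + ⟨Z_S − Λ, P_{Ω⊥}H_S⟩ − (λ/4)‖P_Ω H_S‖_F. -/
theorem stmt13 {n r : ℕ} (L0 S0 : Matrix (Fin n) (Fin n) ℝ)
    (U V : Matrix (Fin n) (Fin r) ℝ) (σ : Fin r → ℝ)
    -- compact SVD of L₀
    (hU : Uᵀ * U = 1) (hV : Vᵀ * V = 1) (hσ : ∀ i, 0 < σ i)
    (hSVD : L0 = U * Matrix.diagonal σ * Vᵀ) (hrank : L0.rank = r)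
    -- P_T is the orthogonal projection onto T
    (PT : Matrix (Fin n) (Fin n) ℝ →ₗ[ℝ] Matrix (Fin n) (Fin n) ℝ)
    (hPT : IsOrthProjOnto PT (Tspace U V))
    (lam : ℝ) (hlam : 0 < lam)
    -- the dual certificate W, and Λ = UV* + W
    (W : Matrix (Fin n) (Fin n) ℝ)
    (hW1 : PT W = 0) (hW2 : specNorm W < 1 / 2)
    (hW3 : frobNorm (projSet (suppSet S0) (U * Vᵀ - lam • sgnMat S0 + W)) ≤ lam / 4)
    (hW4 : linfNorm ((U * Vᵀ + W) - projSet (suppSet S0) (U * Vᵀ + W)) < lam / 2)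
    (Λ : Matrix (Fin n) (Fin n) ℝ) (hΛ : Λ = U * Vᵀ + W)
    -- D with λ P_Ω D = P_Ω(UV* − λ sgn(S₀) + W), so ‖P_Ω D‖_F ≤ 1/4
    (D : Matrix (Fin n) (Fin n) ℝ)
    (hD : lam • projSet (suppSet S0) D =
      projSet (suppSet S0) (U * Vᵀ - lam • sgnMat S0 + W))
    (hD4 : frobNorm (projSet (suppSet S0) D) ≤ 1 / 4)
    -- the subgradients Z_L ∈ ∂‖L₀‖_* and Z_S ∈ ∂(λ‖S₀‖₁)
    (W' F ZL ZS : Matrix (Fin n) (Fin n) ℝ)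
    (hW'1 : PT W' = 0) (hW'2 : specNorm W' ≤ 1) (hZL : ZL = U * Vᵀ + W')
    (hF1 : projSet (suppSet S0) F = 0) (hF2 : linfNorm F ≤ 1)
    (hZS : ZS = lam • (sgnMat S0 + F))
    -- the pair H = (H_L, H_S) with H_L + H_S = 0
    (HL HS : Matrix (Fin n) (Fin n) ℝ) (hH : HL + HS = 0) :
    finner ZL HL + finner ZS HS ≥
      finner (ZL - Λ) (HL - PT HL) + finner (ZS - Λ) (HS - projSet (suppSet S0) HS)
        - (lam / 4) * frobNorm (projSet (suppSet S0) HS) :=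
  stmt13_general S0 U V PT hPT lam hlam W hW1 Λ hΛ D hD hD4 W' F ZL ZS hW'1 hZL hF1 hZS HL HS hH
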